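/- Suppose z* = (x*, y*) satisfies g_j(x*) < 0 for every j ∈ N and y*_j > 0 for every j ∈ B_a, and suppose the radius of active-set stability δ_G is finite. Then the unique fixed point δ_A of Δ equals δ_G. -/

import Mathlib

noncomputable section

open scoped ENNReal
open Classical Filter Topology

/-- The primal-dual space ℝⁿ × ℝᵐ with the Euclidean norm. -/
abbrev Zsp (n m : ℕ) := EuclideanSpace ℝ (Fin n ⊕ Fin m)

/-- The primal (x-) part of a primal-dual point. -/
def xPart {n m : ℕ} (z : Zsp n m) : Fin n → ℝ := fun i => z (Sum.inl i)

/-- The dual (y-) part of a primal-dual point. -/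
def yPart {n m : ℕ} (z : Zsp n m) : Fin m → ℝ := fun j => z (Sum.inr j)

/-- Convex subdifferential of `φ : ℝⁿ → ℝ` at `x`. -/
def subdiff {n : ℕ} (φ : (Fin n → ℝ) → ℝ) (x : Fin n → ℝ) : Set (Fin n → ℝ) :=
  {u | ∀ w, φ x + ∑ i, u i * (w i - x i) ≤ φ w}

/-- Normal cone to the nonnegative orthant ℝᵐ₊ at `y`. -/
def normalConePos {m : ℕ} (y : Fin m → ℝ) : Set (Fin m → ℝ) :=
  {v | ∀ w : Fin m → ℝ, (∀ j, 0 ≤ w j) → ∑ j, v j * (w j - y j) ≤ 0}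

/-- The saddle subdifferential F(z); empty unless the dual part is nonnegative. -/
def saddleF {n m : ℕ} (f : (Fin n → ℝ) → ℝ) (g : Fin m → (Fin n → ℝ) → ℝ)
    (z : Zsp n m) : Set (Zsp n m) :=
  {uv | (∀ j, 0 ≤ yPart z j) ∧
    (∃ a ∈ subdiff f (xPart z), ∃ b : Fin m → Fin n → ℝ,
        (∀ j, b j ∈ subdiff (g j) (xPart z)) ∧
        ∀ i, xPart uv i = a i + ∑ j, yPart z j * b j i) ∧
    (∃ v ∈ normalConePos (yPart z), ∀ j, yPart uv j = -(g j (xPart z)) + v j)}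

/-- The primal-dual solution set S* = {z : 0 ∈ F(z)}. -/
def Sstar {n m : ℕ} (f : (Fin n → ℝ) → ℝ) (g : Fin m → (Fin n → ℝ) → ℝ) :
    Set (Zsp n m) := {z | (0 : Zsp n m) ∈ saddleF f g z}

/-- A primal-dual point regarded as a plain vector indexed by `Fin n ⊕ Fin m`. -/
def toVec {n m : ℕ} (z : Zsp n m) : (Fin n ⊕ Fin m) → ℝ := fun i => z i

/-- The P-seminorm ‖z‖_P = √(zᵀ P z). -/
def pnorm {n m : ℕ} (P : Matrix (Fin n ⊕ Fin m) (Fin n ⊕ Fin m) ℝ) (z : Zsp n m) : ℝ :=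
  Real.sqrt (dotProduct (toVec z) (P.mulVec (toVec z)))

/-- P-distance from a point to a set. -/
def distP {n m : ℕ} (P : Matrix (Fin n ⊕ Fin m) (Fin n ⊕ Fin m) ℝ) (z : Zsp n m)
    (S : Set (Zsp n m)) : ℝ := sInf ((fun w => pnorm P (z - w)) '' S)

/-- ℝ≥0∞-valued Q-seminorm distance from the origin to a set (equal to ⊤ on ∅). -/
def edistQ {n m : ℕ} (Q : Matrix (Fin n ⊕ Fin m) (Fin n ⊕ Fin m) ℝ)
    (A : Set (Zsp n m)) : ℝ≥0∞ := ⨅ w ∈ A, ENNReal.ofReal (pnorm Q w)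

/-- Metric subregularity of the saddle subdifferential near the solution set. -/
def MetricSubregular {n m : ℕ} (f : (Fin n → ℝ) → ℝ)
    (g : Fin m → (Fin n → ℝ) → ℝ) : Prop :=
  ∀ t > (0:ℝ), ∃ α > (0:ℝ), ∀ z : Zsp n m, Metric.infDist z (Sstar f g) ≤ t →
    ENNReal.ofReal (α * Metric.infDist z (Sstar f g)) ≤
      EMetric.infEdist (0 : Zsp n m) (saddleF f g z)

/-- `l` is the largest eigenvalue of `P`. -/
def IsMaxEigen {ι : Type*} [Fintype ι] (P : Matrix ι ι ℝ) (l : ℝ) : Prop :=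
  (∃ v : ι → ℝ, v ≠ 0 ∧ P.mulVec v = l • v) ∧
  ∀ (μ : ℝ) (v : ι → ℝ), v ≠ 0 → P.mulVec v = μ • v → μ ≤ l

/-- The global metric subregularity modulus α_G over the τ-neighborhood of S*. -/
def alphaG {n m : ℕ} (f : (Fin n → ℝ) → ℝ) (g : Fin m → (Fin n → ℝ) → ℝ) (τ : ℝ) : ℝ :=
  sInf {r : ℝ | ∃ z : Zsp n m, Metric.infDist z (Sstar f g) ≤ τ ∧
    0 < Metric.infDist z (Sstar f g) ∧ (saddleF f g z).Nonempty ∧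
    r = Metric.infDist (0 : Zsp n m) (saddleF f g z) / Metric.infDist z (Sstar f g)}

/-- The optimal primal Lipschitz modulus L̄ˣ_j(t) on the P-ball of radius t around z*. -/
def Lxbar {n m : ℕ} (g : Fin m → (Fin n → ℝ) → ℝ)
    (P : Matrix (Fin n ⊕ Fin m) (Fin n ⊕ Fin m) ℝ) (zstar : Zsp n m)
    (j : Fin m) (t : ℝ) : ℝ :=
  sSup {r : ℝ | ∃ w : Zsp n m, 0 < pnorm P (w - zstar) ∧ pnorm P (w - zstar) ≤ t ∧
    r = max (g j (xPart w) - g j (xPart zstar)) 0 / pnorm P (w - zstar)}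

/-- The optimal dual Lipschitz modulus L̄ʸ_j(t) on the P-ball of radius t around z*. -/
def Lybar {n m : ℕ} (P : Matrix (Fin n ⊕ Fin m) (Fin n ⊕ Fin m) ℝ) (zstar : Zsp n m)
    (j : Fin m) (t : ℝ) : ℝ :=
  sSup {r : ℝ | ∃ w : Zsp n m, 0 < pnorm P (w - zstar) ∧ pnorm P (w - zstar) ≤ t ∧
    r = max (yPart zstar j - yPart w j) 0 / pnorm P (w - zstar)}

/-- The set of radii of active-set stability around z*. -/
def stabSet {n m : ℕ} (g : Fin m → (Fin n → ℝ) → ℝ)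
    (P : Matrix (Fin n ⊕ Fin m) (Fin n ⊕ Fin m) ℝ) (zstar : Zsp n m) : Set ℝ :=
  {t : ℝ | 0 < t ∧ ∀ w : Zsp n m, pnorm P (w - zstar) < t →
    (∀ j, g j (xPart zstar) < 0 → g j (xPart w) < 0) ∧
    (∀ j, g j (xPart zstar) = 0 → 0 < yPart zstar j → 0 < yPart w j)}

/-- The radius of active-set stability δ. -/
def deltaG {n m : ℕ} (g : Fin m → (Fin n → ℝ) → ℝ)
    (P : Matrix (Fin n ⊕ Fin m) (Fin n ⊕ Fin m) ℝ) (zstar : Zsp n m) : ℝ :=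
  sSup (stabSet g P zstar)

/-- The identifiable set M associated with the limit solution z*. -/
def Mset {n m : ℕ} (g : Fin m → (Fin n → ℝ) → ℝ) (zstar : Zsp n m) :
    Set (Zsp n m) :=
  {w | (∀ j, 0 ≤ yPart w j) ∧
    (∀ j, g j (xPart zstar) < 0 → g j (xPart w) < 0 ∧ yPart w j = 0) ∧
    (∀ j, g j (xPart zstar) = 0 → 0 < yPart zstar j → 0 < yPart w j)}

/-- The dual function h(y) = inf_x (f(x) + ⟨y, G(x)⟩), with values in EReal. -/
def hdualFn {n m : ℕ} (f : (Fin n → ℝ) → ℝ) (g : Fin m → (Fin n → ℝ) → ℝ)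
    (y : Fin m → ℝ) : EReal :=
  ⨅ x : Fin n → ℝ, ((f x + ∑ j, y j * g j x : ℝ) : EReal)

/-- The solution set S*_L of the reduced system (only constraints indexed by B). -/
def SstarL {n m : ℕ} (f : (Fin n → ℝ) → ℝ) (g : Fin m → (Fin n → ℝ) → ℝ)
    (zstar : Zsp n m) : Set (Zsp n m) :=
  {z | ((f (xPart z) : ℝ) : EReal) ≤ hdualFn f g (yPart z) ∧
    (∀ j, g j (xPart zstar) = 0 → g j (xPart z) ≤ 0) ∧
    ∀ j, 0 ≤ yPart z j}

/-- The local metric subregularity modulus α_L. -/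
def alphaL {n m : ℕ} (f : (Fin n → ℝ) → ℝ) (g : Fin m → (Fin n → ℝ) → ℝ)
    (zstar : Zsp n m) (τ : ℝ) : ℝ :=
  sInf {r : ℝ | ∃ z : Zsp n m, Metric.infDist z (Sstar f g) ≤ τ ∧
    0 < Metric.infDist z (SstarL f g zstar) ∧ (saddleF f g z).Nonempty ∧
    r = Metric.infDist (0 : Zsp n m) (saddleF f g z) /
      Metric.infDist z (SstarL f g zstar)}

/-- The restricted metric subregularity modulus α_M over M ∩ B_P(z*, δ/2). -/
def alphaM {n m : ℕ} (f : (Fin n → ℝ) → ℝ) (g : Fin m → (Fin n → ℝ) → ℝ)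
    (P : Matrix (Fin n ⊕ Fin m) (Fin n ⊕ Fin m) ℝ) (zstar : Zsp n m)
    (τ δ : ℝ) : ℝ :=
  sInf {r : ℝ | ∃ z : Zsp n m, Metric.infDist z (Sstar f g) ≤ τ ∧
    pnorm P (z - zstar) < δ / 2 ∧ z ∈ Mset g zstar ∧
    0 < Metric.infDist z (Sstar f g) ∧ (saddleF f g z).Nonempty ∧
    r = Metric.infDist (0 : Zsp n m) (saddleF f g z) /
      Metric.infDist z (Sstar f g)}

/-- The function Δ, with values in ℝ≥0∞ (conventions: a/0 = ∞ for a > 0, inf ∅ = ∞). -/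
def DeltaFn {n m : ℕ} (g : Fin m → (Fin n → ℝ) → ℝ)
    (P : Matrix (Fin n ⊕ Fin m) (Fin n ⊕ Fin m) ℝ) (zstar : Zsp n m)
    (t : ℝ) : ℝ≥0∞ :=
  min
    (⨅ j ∈ {j : Fin m | g j (xPart zstar) < 0},
      ENNReal.ofReal (-(g j (xPart zstar))) / ENNReal.ofReal (Lxbar g P zstar j t))
    (⨅ j ∈ {j : Fin m | g j (xPart zstar) = 0 ∧ 0 < yPart zstar j},
      ENNReal.ofReal (yPart zstar j) / ENNReal.ofReal (Lybar P zstar j t))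

/-!
δ_A is the largest radius of active-set stability. Write each stability condition as
`h w < 0` with `h` convex (`g_j ∘ xPart` for `j ∈ N`, `-y_j` for `j ∈ B_a`) and put
`a = -h z*`. If `t · L̄(t) ≤ a` and `h w ≥ 0` at P-distance `s < t`, the difference quotient
at `w` is at least `a / s > a / t ≥ L̄(t)`, which is absurd; so `Δ(δ_A) = δ_A` makes `δ_A` a
stability radius. Conversely, if `t` is a stability radius then `h ≤ 0` on the closed P-ball
of radius `t`, and convexity along the ray from `z*` through `w` to that sphere bounds every
difference quotient by `a / t`; hence `Δ(δ) ≥ t` for all `δ ≤ t`, and `δ = δ_A` gives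
`t ≤ δ_A`.
-/

section PNorm

variable {n m : ℕ} {P : Matrix (Fin n ⊕ Fin m) (Fin n ⊕ Fin m) ℝ}

lemma pnorm_zero : pnorm P (0 : Zsp n m) = 0 := by
  have hvec : toVec (0 : Zsp n m) = 0 := rfl
  simp [pnorm, hvec]

lemma pnorm_smul (a : ℝ) (z : Zsp n m) : pnorm P (a • z) = |a| * pnorm P z := by
  have hvec : toVec (a • z) = a • toVec z := rfl
  rw [pnorm, pnorm, hvec, Matrix.mulVec_smul, smul_dotProduct, dotProduct_smul, smul_smul,
    smul_eq_mul, ← sq, Real.sqrt_mul (sq_nonneg a), Real.sqrt_sq_eq_abs]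

lemma pnorm_pos (hP : P.PosDef) {z : Zsp n m} (hz : z ≠ 0) : 0 < pnorm P z := by
  have hvec : toVec z ≠ 0 := fun h => hz (by ext i; exact congrFun h i)
  simpa [pnorm] using hP.dotProduct_mulVec_pos hvec

lemma continuous_pnorm : Continuous (pnorm P : Zsp n m → ℝ) := by
  unfold pnorm toVec dotProduct Matrix.mulVec
  fun_prop

lemma exists_pos_mul_norm_le_pnorm (hP : P.PosDef) :
    ∃ c > 0, ∀ z : Zsp n m, c * ‖z‖ ≤ pnorm P z := by
  obtain ⟨c, hc, hcS⟩ := (isCompact_sphere (0 : Zsp n m) 1).exists_forall_le'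
    continuous_pnorm.continuousOn fun z hz => pnorm_pos hP (ne_zero_of_mem_unit_sphere ⟨z, hz⟩)
  refine ⟨c, hc, fun z => ?_⟩
  rcases eq_or_ne z 0 with rfl | hz
  · simp [pnorm_zero]
  · have hz' : 0 < ‖z‖ := norm_pos_iff.2 hz
    have hunit : ‖z‖⁻¹ • z ∈ Metric.sphere (0 : Zsp n m) 1 := by
      simp [norm_smul, hz'.ne']
    calc c * ‖z‖ ≤ pnorm P (‖z‖⁻¹ • z) * ‖z‖ := by gcongr; exact hcS _ hunit
      _ = pnorm P z := by
        rw [pnorm_smul, abs_of_pos (inv_pos.2 hz'), mul_comm, ← mul_assoc,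
          mul_inv_cancel₀ hz'.ne', one_mul]

end PNorm

section Slopes

variable {n m : ℕ} {P : Matrix (Fin n ⊕ Fin m) (Fin n ⊕ Fin m) ℝ} {zstar : Zsp n m}
  {h : Zsp n m → ℝ} {t : ℝ}

def slopeSet (P : Matrix (Fin n ⊕ Fin m) (Fin n ⊕ Fin m) ℝ) (zstar : Zsp n m)
    (h : Zsp n m → ℝ) (t : ℝ) : Set ℝ :=
  {r : ℝ | ∃ w : Zsp n m, 0 < pnorm P (w - zstar) ∧ pnorm P (w - zstar) ≤ t ∧
    r = max (h w - h zstar) 0 / pnorm P (w - zstar)}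

lemma Lxbar_eq_sSup_slopeSet (g : Fin m → (Fin n → ℝ) → ℝ) (j : Fin m) :
    Lxbar g P zstar j t = sSup (slopeSet P zstar (fun w => g j (xPart w)) t) := rfl

lemma Lybar_eq_sSup_slopeSet (j : Fin m) :
    Lybar P zstar j t = sSup (slopeSet P zstar (fun w => -yPart w j) t) := by
  simp only [Lybar, slopeSet, neg_sub_neg]

lemma sSup_slopeSet_nonneg : 0 ≤ sSup (slopeSet P zstar h t) :=
  Real.sSup_nonneg fun _ ⟨_, hs, _, hr⟩ => hr ▸ div_nonneg (le_max_right _ _) hs.le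

lemma bddAbove_slopeSet (hP : P.PosDef) (hh : ConvexOn ℝ Set.univ h) :
    BddAbove (slopeSet P zstar h t) := by
  obtain ⟨c, hc, hcP⟩ := exists_pos_mul_norm_le_pnorm hP
  obtain ⟨K, hK⟩ := hh.locallyLipschitz.locallyLipschitzOn.exists_lipschitzOnWith_of_compact
    (isCompact_closedBall zstar (t / c))
  refine ⟨K / c, ?_⟩
  rintro r ⟨w, hs0, hst, rfl⟩
  have hwz : ‖w - zstar‖ ≤ pnorm P (w - zstar) / c := (le_div_iff₀' hc).2 (hcP _)
  have hw : w ∈ Metric.closedBall zstar (t / c) := by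
    rw [Metric.mem_closedBall, dist_eq_norm]
    exact hwz.trans (by gcongr)
  have hz : zstar ∈ Metric.closedBall zstar (t / c) :=
    Metric.mem_closedBall_self (div_nonneg (hs0.le.trans hst) hc.le)
  have hdiff : h w - h zstar ≤ K * (pnorm P (w - zstar) / c) :=
    calc h w - h zstar ≤ dist (h w) (h zstar) := le_abs_self _
      _ ≤ K * dist w zstar := hK.dist_le_mul w hw zstar hz
      _ ≤ K * (pnorm P (w - zstar) / c) := by rw [dist_eq_norm]; gcongr
  rw [div_le_iff₀ hs0]
  calc max (h w - h zstar) 0 ≤ K * (pnorm P (w - zstar) / c) :=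
        max_le hdiff (by positivity)
    _ = K / c * pnorm P (w - zstar) := by ring

lemma nonpos_of_forall_pnorm_sub_lt (hh : Continuous h) (ht : 0 < t)
    (hlt : ∀ w, pnorm P (w - zstar) < t → h w < 0) {u : Zsp n m}
    (hu : pnorm P (u - zstar) ≤ t) : h u ≤ 0 := by
  set φ : ℝ → ℝ := fun μ => h (zstar + μ • (u - zstar))
  have hφ : Continuous φ := by fun_prop
  have hIco : Set.Ico (0 : ℝ) 1 ⊆ {μ | φ μ ≤ 0} := by
    rintro μ ⟨hμ0, hμ1⟩
    refine (hlt _ ?_).le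
    rw [add_sub_cancel_left, pnorm_smul, abs_of_nonneg hμ0]
    calc μ * pnorm P (u - zstar) ≤ μ * t := by gcongr
      _ < t := mul_lt_of_lt_one_left ht hμ1
  have h1 : (1 : ℝ) ∈ closure (Set.Ico 0 1) := by
    rw [closure_Ico zero_ne_one]
    exact ⟨zero_le_one, le_rfl⟩
  simpa [φ] using (isClosed_le hφ continuous_const).closure_subset_iff.2 hIco h1

lemma mul_sSup_slopeSet_le (hh : ConvexOn ℝ Set.univ h) (ht : 0 < t)
    (hlt : ∀ w, pnorm P (w - zstar) < t → h w < 0) {t' : ℝ} (ht' : t' ≤ t) :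
    t * sSup (slopeSet P zstar h t') ≤ -h zstar := by
  have hneg : h zstar < 0 := hlt zstar (by rwa [sub_self, pnorm_zero])
  rw [← le_div_iff₀' ht]
  refine Real.sSup_le ?_ (div_nonneg (neg_nonneg.2 hneg.le) ht.le)
  rintro r ⟨w, hs0, hst, rfl⟩
  set s := pnorm P (w - zstar)
  set u := zstar + (t / s) • (w - zstar)
  have hu : h u ≤ 0 := by
    refine nonpos_of_forall_pnorm_sub_lt hh.locallyLipschitz.continuous ht hlt (le_of_eq ?_)
    rw [add_sub_cancel_left, pnorm_smul, abs_of_pos (div_pos ht hs0), div_mul_cancel₀ _ hs0.ne']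
  have hw : (1 - s / t) • zstar + (s / t) • u = w := by
    have hst1 : s / t * (t / s) = 1 := by field_simp
    simp only [u, smul_add, smul_smul, hst1, one_smul]
    module
  have hconv := hh.2 (Set.mem_univ zstar) (Set.mem_univ u)
    (sub_nonneg.2 ((div_le_one ht).2 (hst.trans ht'))) (div_nonneg hs0.le ht.le)
    (sub_add_cancel 1 (s / t))
  rw [hw, smul_eq_mul, smul_eq_mul] at hconv
  have hdiff : h w - h zstar ≤ -h zstar * s / t := by
    have : s / t * h u ≤ 0 := mul_nonpos_of_nonneg_of_nonpos (div_nonneg hs0.le ht.le) hu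
    have : (1 - s / t) * h zstar - h zstar = -h zstar * s / t := by ring
    linarith
  rw [div_le_div_iff₀ hs0 ht]
  calc max (h w - h zstar) 0 * t ≤ -h zstar * s / t * t := by
        gcongr
        exact max_le hdiff (div_nonneg (mul_nonneg (neg_nonneg.2 hneg.le) hs0.le) ht.le)
    _ = -h zstar * s := div_mul_cancel₀ _ ht.ne'

lemma neg_of_mul_sSup_slopeSet_le (hP : P.PosDef) (hh : ConvexOn ℝ Set.univ h)
    (hneg : h zstar < 0) (hfix : t * sSup (slopeSet P zstar h t) ≤ -h zstar) {w : Zsp n m}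
    (hw : pnorm P (w - zstar) < t) : h w < 0 := by
  rcases eq_or_ne w zstar with rfl | hwz
  · exact hneg
  have hs0 : 0 < pnorm P (w - zstar) := pnorm_pos hP (sub_ne_zero.2 hwz)
  by_contra! hw0
  have hquot : -h zstar / pnorm P (w - zstar) ≤ sSup (slopeSet P zstar h t) :=
    (div_le_div_of_nonneg_right (le_max_of_le_left (by linarith)) hs0.le).trans
      (le_csSup (bddAbove_slopeSet hP hh) ⟨w, hs0, hw.le, rfl⟩)
  have hpos : 0 < sSup (slopeSet P zstar h t) :=
    (div_pos (neg_pos.2 hneg) hs0).trans_le hquot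
  rw [div_le_iff₀ hs0] at hquot
  linarith [mul_lt_mul_of_pos_right hw hpos]

end Slopes

lemma ENNReal.ofReal_le_ofReal_div_ofReal_iff {a t L : ℝ} (ha : 0 < a) (hL : 0 ≤ L) :
    ENNReal.ofReal t ≤ ENNReal.ofReal a / ENNReal.ofReal L ↔ t * L ≤ a := by
  rcases hL.eq_or_lt with rfl | hL
  · rw [ENNReal.ofReal_zero, ENNReal.div_zero (ENNReal.ofReal_pos.2 ha).ne', mul_zero]
    exact iff_of_true le_top ha.le
  · rw [← ENNReal.ofReal_div_of_pos hL, ENNReal.ofReal_le_ofReal_iff (by positivity),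
      le_div_iff₀ hL]

section Delta

variable {n m : ℕ} {g : Fin m → (Fin n → ℝ) → ℝ}
  {P : Matrix (Fin n ⊕ Fin m) (Fin n ⊕ Fin m) ℝ} {zstar : Zsp n m}

lemma ofReal_le_DeltaFn_iff (t s : ℝ) :
    ENNReal.ofReal t ≤ DeltaFn g P zstar s ↔
      (∀ j, g j (xPart zstar) < 0 → t * Lxbar g P zstar j s ≤ -g j (xPart zstar)) ∧
      (∀ j, g j (xPart zstar) = 0 → 0 < yPart zstar j →
        t * Lybar P zstar j s ≤ yPart zstar j) := by
  simp only [DeltaFn, le_min_iff, le_iInf_iff, Set.mem_ofPred_eq, and_imp]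
  refine and_congr (forall_congr' fun j => imp_congr_right fun hj => ?_)
    (forall_congr' fun j => forall_congr' fun _ => imp_congr_right fun hy => ?_)
  · exact ENNReal.ofReal_le_ofReal_div_ofReal_iff (neg_pos.2 hj)
      (Lxbar_eq_sSup_slopeSet g j ▸ sSup_slopeSet_nonneg)
  · exact ENNReal.ofReal_le_ofReal_div_ofReal_iff hy
      (Lybar_eq_sSup_slopeSet j ▸ sSup_slopeSet_nonneg)

lemma convexOn_comp_xPart {φ : (Fin n → ℝ) → ℝ} (hφ : ConvexOn ℝ Set.univ φ) :
    ConvexOn ℝ Set.univ fun w : Zsp n m => φ (xPart w) :=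
  ⟨convex_univ, fun _ _ _ _ _ _ ha hb hab => hφ.2 (Set.mem_univ _) (Set.mem_univ _) ha hb hab⟩

lemma convexOn_neg_yPart (j : Fin m) : ConvexOn ℝ Set.univ fun w : Zsp n m => -yPart w j :=
  ⟨convex_univ, fun _ _ _ _ _ _ _ _ _ => le_of_eq <| by
    simp only [yPart, PiLp.add_apply, PiLp.smul_apply, smul_eq_mul]
    ring⟩

lemma mem_stabSet_of_ofReal_le_DeltaFn (hP : P.PosDef) (hg : ∀ j, ConvexOn ℝ Set.univ (g j))
    {t : ℝ} (ht : 0 < t) (hΔ : ENNReal.ofReal t ≤ DeltaFn g P zstar t) :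
    t ∈ stabSet g P zstar := by
  obtain ⟨hN, hB⟩ := (ofReal_le_DeltaFn_iff t t).1 hΔ
  refine ⟨ht, fun w hw => ⟨fun j hj => ?_, fun j hj hy => ?_⟩⟩
  · exact neg_of_mul_sSup_slopeSet_le hP (convexOn_comp_xPart (hg j)) hj (hN j hj) hw
  · have hfix := hB j hj hy
    rw [Lybar_eq_sSup_slopeSet, ← neg_neg (yPart zstar j)] at hfix
    exact neg_neg_iff_pos.1 <|
      neg_of_mul_sSup_slopeSet_le hP (convexOn_neg_yPart j) (neg_neg_iff_pos.2 hy) hfix hw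

lemma ofReal_le_DeltaFn_of_mem_stabSet (hg : ∀ j, ConvexOn ℝ Set.univ (g j)) {t s : ℝ}
    (ht : t ∈ stabSet g P zstar) (hst : s ≤ t) :
    ENNReal.ofReal t ≤ DeltaFn g P zstar s := by
  obtain ⟨ht0, hstab⟩ := ht
  refine (ofReal_le_DeltaFn_iff t s).2 ⟨fun j hj => ?_, fun j hj hy => ?_⟩
  · exact mul_sSup_slopeSet_le (convexOn_comp_xPart (hg j)) ht0
      (fun w hw => (hstab w hw).1 j hj) hst
  · rw [Lybar_eq_sSup_slopeSet, ← neg_neg (yPart zstar j)]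
    exact mul_sSup_slopeSet_le (convexOn_neg_yPart j) ht0
      (fun w hw => neg_neg_iff_pos.2 ((hstab w hw).2 j hj hy)) hst

end Delta

theorem stmt13_general
    (n m : ℕ)
    (g : Fin m → (Fin n → ℝ) → ℝ)
    (hg : ∀ j, ConvexOn ℝ Set.univ (g j))
    (P : Matrix (Fin n ⊕ Fin m) (Fin n ⊕ Fin m) ℝ) (hP : P.PosDef)
    (zstar : Zsp n m)
    (δA : ℝ) (hδA : 0 < δA) (hfix : DeltaFn g P zstar δA = ENNReal.ofReal δA) :
    δA = deltaG g P zstar := by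
  have hstab : δA ∈ stabSet g P zstar :=
    mem_stabSet_of_ofReal_le_DeltaFn hP hg hδA hfix.ge
  refine (IsGreatest.csSup_eq ⟨hstab, fun t ht => ?_⟩).symm
  rcases le_total t δA with htδ | hδt
  · exact htδ
  · have hΔ := ofReal_le_DeltaFn_of_mem_stabSet hg ht hδt
    rwa [hfix, ENNReal.ofReal_le_ofReal_iff hδA.le] at hΔ

/-- Proposition: the fixed point δ_A of Δ equals δ_G. -/
theorem stmt13
    (n m : ℕ) (hn : 0 < n) (hm : 0 < m)
    (f : (Fin n → ℝ) → ℝ) (g : Fin m → (Fin n → ℝ) → ℝ)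
    (hf : ConvexOn ℝ Set.univ f) (hg : ∀ j, ConvexOn ℝ Set.univ (g j))
    (P : Matrix (Fin n ⊕ Fin m) (Fin n ⊕ Fin m) ℝ) (hP : P.PosDef)
    (zstar : Zsp n m)
    -- δ_G is finite
    (hδfin : BddAbove (stabSet g P zstar))
    (δA : ℝ) (hδA : 0 < δA) (hfix : DeltaFn g P zstar δA = ENNReal.ofReal δA) :
    δA = deltaG g P zstar :=
  stmt13_general n m g hg P hP zstar δA hδA hfix
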